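/- For all c ≥ 0 and all φ ∈ ℝ, ∫₀^{2π} ∫₀^{2π} |exp(-c·cos(q₁ - q₂ + φ)) - 1| dq₁ dq₂ = 4π² L₀(c), where L₀ is the modified Struve function of order zero, L₀(c) = Σ_{m≥0} (c/2)^{2m+1} / (Γ(m+3/2))². -/

import Mathlib

/-!
The inner integral runs over a full period of `x ↦ |exp (-c cos x) - 1|`, so it depends neither
on `q₁` nor on `φ`. Pairing `x` with `x + π` for `x ∈ [-π/2, π/2]`, where `cos x ≥ 0`, the two
absolute values add up to `2 sinh (c cos x)`, so one period contributes
`4 ∫₀^{π/2} sinh (c cos θ) dθ = 2π L₀(c)`. The last equality is the integral representation of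
`L₀`: integrate the sinh series termwise, using Wallis' integrals
`∫₀^{π/2} cos^{2m+1} = (2m)‼ / (2m+1)‼` and `Γ(m + 3/2) = (2m+1)‼ √π / 2^{m+1}`.
-/

open MeasureTheory Real

/-- The modified Struve function of order zero,
`L₀(c) = Σ_{m≥0} (c/2)^(2m+1) / Γ(m+3/2)²`. -/
noncomputable def struveL0 (c : ℝ) : ℝ :=
  ∑' m : ℕ, (c/2)^(2*m+1) / (Real.Gamma ((m : ℝ) + 3/2))^2

section PeriodIntegrals

variable {E : Type*} [NormedAddCommGroup E] [NormedSpace ℝ E] {f : ℝ → E}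

theorem intervalIntegral.integral_add_comp_add_right_eq {a T : ℝ}
    (h₁ : IntervalIntegrable f volume a (a + T))
    (h₂ : IntervalIntegrable f volume (a + T) (a + T + T)) :
    ∫ x in a..a + T, (f x + f (x + T)) = ∫ x in a..a + T + T, f x := by
  have h₂' : IntervalIntegrable (fun x ↦ f (x + T)) volume a (a + T) := by
    simpa using h₂.comp_add_right T
  rw [integral_add h₁ h₂', integral_comp_add_right, integral_add_adjacent_intervals h₁ h₂]

theorem Function.Even.intervalIntegral_neg_eq_two_nsmul (hf : Function.Even f) {a : ℝ}
    (hint : IntervalIntegrable f volume 0 a) :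
    ∫ x in -a..a, f x = 2 • ∫ x in 0..a, f x := by
  have hneg : IntervalIntegrable f volume (-a) 0 := by
    simpa [hf _] using (IntervalIntegrable.iff_comp_neg (f := f)).mp hint.symm
  rw [← intervalIntegral.integral_add_adjacent_intervals hneg hint, two_nsmul]
  congr 1
  simpa [hf _] using (intervalIntegral.integral_comp_neg (a := 0) (b := a) f).symm

theorem Function.Periodic.intervalIntegral_comp_sub_left {T : ℝ} (hf : Function.Periodic f T)
    (s t : ℝ) : ∫ x in t..t + T, f (s - x) = ∫ x in t..t + T, f x := by
  rw [intervalIntegral.integral_comp_sub_left, ← hf.intervalIntegral_add_eq (s - (t + T)) t]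
  congr 1; ring

end PeriodIntegrals

section Series

open scoped Nat

theorem integral_cos_pow_two_mul_add_one (m : ℕ) :
    ∫ x in 0..π/2, cos x ^ (2 * m + 1) = (2 * m)‼ / (2 * m + 1)‼ := by
  induction m with
  | zero => simp
  | succ m ih =>
    rw [show 2 * (m + 1) + 1 = 2 * m + 1 + 2 by ring, integral_cos_pow, ih,
      show 2 * (m + 1) = 2 * m + 2 by ring, Nat.doubleFactorial_add_two,
      Nat.doubleFactorial_add_two]
    simp [field]
    ring

theorem hasSum_integral_sinh_mul_cos (c a b : ℝ) :
    HasSum (fun m : ℕ ↦ ∫ θ in a..b, (c * cos θ) ^ (2 * m + 1) / (2 * m + 1)!)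
      (∫ θ in a..b, sinh (c * cos θ)) := by
  refine intervalIntegral.hasSum_integral_of_dominated_convergence
    (fun m _ ↦ |c| ^ (2 * m + 1) / (2 * m + 1)!) (fun m ↦ by fun_prop) (fun m ↦ ?_)
    (.of_forall fun _ _ ↦ (hasSum_sinh |c|).summable) intervalIntegrable_const
    (.of_forall fun θ _ ↦ hasSum_sinh _)
  refine .of_forall fun θ _ ↦ ?_
  rw [norm_div, norm_pow, norm_mul, Real.norm_natCast]
  gcongr
  exact mul_le_of_le_one_right (abs_nonneg c) (abs_cos_le_one θ)

theorem struveL0_summand_eq_integral (c : ℝ) (m : ℕ) :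
    (c / 2) ^ (2 * m + 1) / Gamma (m + 3 / 2) ^ 2
      = 2 / π * ∫ θ in 0..π/2, (c * cos θ) ^ (2 * m + 1) / (2 * m + 1)! := by
  simp_rw [mul_pow, mul_div_right_comm]
  rw [intervalIntegral.integral_const_mul, integral_cos_pow_two_mul_add_one,
    show (m : ℝ) + 3 / 2 = m + 1 + 1 / 2 by ring, Gamma_nat_add_one_add_half,
    Nat.factorial_eq_mul_doubleFactorial, div_pow c, div_pow _ (2 ^ (m + 1)), mul_pow,
    sq_sqrt pi_pos.le, ← pow_mul, show (m + 1) * 2 = 2 * m + 1 + 1 by ring]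
  push_cast
  field_simp
  ring

theorem struveL0_eq_integral (c : ℝ) :
    struveL0 c = 2 / π * ∫ θ in 0..π/2, sinh (c * cos θ) := by
  simp_rw [struveL0, struveL0_summand_eq_integral]
  exact ((hasSum_integral_sinh_mul_cos c 0 (π / 2)).mul_left (2 / π)).tsum_eq

end Series

theorem abs_exp_neg_mul_cos_sub_one_add_shift_pi {c x : ℝ} (hc : 0 ≤ c) (hx : 0 ≤ cos x) :
    |exp (-c * cos x) - 1| + |exp (-c * cos (x + π)) - 1| = 2 * sinh (c * cos x) := by
  have hcx : 0 ≤ c * cos x := mul_nonneg hc hx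
  rw [cos_add_pi, abs_of_nonpos (by simpa using hcx), abs_of_nonneg (by simpa using hcx),
    sinh_eq]
  ring_nf

theorem integral_abs_exp_neg_mul_cos_sub_one {c : ℝ} (hc : 0 ≤ c) :
    ∫ x in 0..2 * π, |exp (-c * cos x) - 1| = 2 * π * struveL0 c := by
  set f : ℝ → ℝ := fun x ↦ |exp (-c * cos x) - 1|
  have hf : Continuous f := by fun_prop
  have hper : Function.Periodic f (2 * π) := fun x ↦ by simp [f]
  calc ∫ x in 0..2 * π, f x = ∫ x in -(π / 2)..-(π / 2) + π + π, f x := by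
        rw [add_assoc, ← two_mul, ← hper.intervalIntegral_add_eq 0, zero_add]
    _ = ∫ x in -(π / 2)..π / 2, 2 * sinh (c * cos x) := by
        rw [← intervalIntegral.integral_add_comp_add_right_eq (hf.intervalIntegrable _ _)
          (hf.intervalIntegrable _ _), show -(π / 2) + π = π / 2 by ring]
        refine intervalIntegral.integral_congr fun x hx ↦ ?_
        rw [Set.uIcc_of_le (by linarith [pi_pos])] at hx
        exact abs_exp_neg_mul_cos_sub_one_add_shift_pi hc (cos_nonneg_of_mem_Icc hx)
    _ = 2 * π * struveL0 c := by
        rw [intervalIntegral.integral_const_mul,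
          Function.Even.intervalIntegral_neg_eq_two_nsmul (fun x ↦ by simp)
            ((by fun_prop : Continuous fun x ↦ sinh (c * cos x)).intervalIntegrable _ _),
          nsmul_eq_mul, Nat.cast_ofNat, struveL0_eq_integral]
        field_simp

theorem double_angular_integral_eq_struve (c φ : ℝ) (hc : 0 ≤ c) :
    (∫ q₁ in Set.Ioo (0:ℝ) (2*π), ∫ q₂ in Set.Ioo (0:ℝ) (2*π),
        |Real.exp (-c * Real.cos (q₁ - q₂ + φ)) - 1|)
      = 4 * π^2 * struveL0 c := by
  have hper : Function.Periodic (fun x ↦ |exp (-c * cos x) - 1|) (2 * π) := fun x ↦ by simp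
  have inner (q₁ : ℝ) : ∫ q₂ in Set.Ioo 0 (2 * π), |exp (-c * cos (q₁ - q₂ + φ)) - 1|
      = 2 * π * struveL0 c := by
    rw [← integral_Ioc_eq_integral_Ioo, ← intervalIntegral.integral_of_le two_pi_pos.le,
      ← integral_abs_exp_neg_mul_cos_sub_one hc]
    simpa [sub_add_eq_add_sub] using hper.intervalIntegral_comp_sub_left (q₁ + φ) 0
  rw [setIntegral_congr_fun measurableSet_Ioo fun q₁ _ ↦ inner q₁, setIntegral_const,
    Real.volume_real_Ioo_of_le two_pi_pos.le, smul_eq_mul]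
  ring
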